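/- Let F be an infinite field, B = F[ζ]/(ζ²), and A_ζ(B) = B⟨x,y⟩/⟨yx−xy−ζ⟩. Then f₁ = [[x₁,x₂],x₃] and f₂ = [x₁,x₂][x₃,x₄] are polynomial identities for A_ζ(B): every commutator [a,b] with a,b ∈ A_ζ(B) lies in ζ·A_ζ(B), and hence products of two commutators vanish and commutators are central. -/
import Mathlib

noncomputable section

section AuxRing

variable {R : Type*} [Ring R]

lemma auxZ_comm (Z a b : R) (h : a * b = b * a) : a * b - b * a = Z * 0 := by
  rw [h, sub_self, mul_zero]

lemma auxZ_yx (Z x y : R) (h : y * x = x * y + Z) : y * x - x * y = Z * 1 := by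
  rw [h, mul_one]; abel

lemma auxZ_xy (Z x y : R) (h : y * x = x * y + Z) : x * y - y * x = Z * (-1) := by
  rw [h, mul_neg_one]; abel

lemma auxZ_mul_right (Z : R) (hZc : ∀ w : R, Z * w = w * Z) (a b d c1 c2 : R)
    (h1 : a * b - b * a = Z * c1) (h2 : a * d - d * a = Z * c2) :
    a * (b * d) - (b * d) * a = Z * (b * c2 + c1 * d) := by
  calc a * (b * d) - (b * d) * a
      = b * (a * d - d * a) + (a * b - b * a) * d := by noncomm_ring
    _ = b * (Z * c2) + (Z * c1) * d := by rw [h1, h2]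
    _ = Z * (b * c2 + c1 * d) := by
        rw [← mul_assoc b Z c2, ← hZc b, mul_assoc Z b c2, mul_assoc Z c1 d, mul_add]

lemma auxZ_mul_left (Z : R) (hZc : ∀ w : R, Z * w = w * Z) (a d q c1 c2 : R)
    (h1 : a * q - q * a = Z * c1) (h2 : d * q - q * d = Z * c2) :
    (a * d) * q - q * (a * d) = Z * (a * c2 + c1 * d) := by
  calc (a * d) * q - q * (a * d)
      = a * (d * q - q * d) + (a * q - q * a) * d := by noncomm_ring
    _ = a * (Z * c2) + (Z * c1) * d := by rw [h1, h2]
    _ = Z * (a * c2 + c1 * d) := by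
        rw [← mul_assoc a Z c2, ← hZc a, mul_assoc Z a c2, mul_assoc Z c1 d, mul_add]

lemma auxZ_add_right (Z a b d c1 c2 : R)
    (h1 : a * b - b * a = Z * c1) (h2 : a * d - d * a = Z * c2) :
    a * (b + d) - (b + d) * a = Z * (c1 + c2) := by
  rw [mul_add, add_mul, mul_add, ← h1, ← h2]; abel

lemma auxZ_add_left (Z a b q c1 c2 : R)
    (h1 : a * q - q * a = Z * c1) (h2 : b * q - q * b = Z * c2) :
    (a + b) * q - q * (a + b) = Z * (c1 + c2) := by
  rw [add_mul, mul_add, mul_add, ← h1, ← h2]; abel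

lemma auxZ_prod (Z : R) (hZc : ∀ w : R, Z * w = w * Z) (hZZ : Z * Z = 0) (a b c d c1 c2 : R)
    (h1 : a * b - b * a = Z * c1) (h2 : c * d - d * c = Z * c2) :
    (a * b - b * a) * (c * d - d * c) = 0 := by
  rw [h1, h2, mul_assoc, ← mul_assoc c1 Z c2, ← hZc c1, mul_assoc Z c1 c2,
    ← mul_assoc Z Z (c1 * c2), hZZ, zero_mul]

lemma auxZ_central (Z : R) (hZc : ∀ w : R, Z * w = w * Z) (hZZ : Z * Z = 0) (a b c c1 c2 : R)
    (h1 : a * b - b * a = Z * c1) (h2 : c1 * c - c * c1 = Z * c2) :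
    (a * b - b * a) * c = c * (a * b - b * a) := by
  have hcc : c1 * c = c * c1 + Z * c2 := by rw [← h2]; abel
  rw [h1, mul_assoc, hcc, mul_add, ← mul_assoc Z Z c2, hZZ, zero_mul, add_zero,
    ← mul_assoc Z c c1, hZc c, mul_assoc c Z c1]

end AuxRing

variable (F : Type*) [Field F]

/-- Shortcut instance (definitionally `inferInstance`), to speed up typeclass search. -/
instance instCommRingDual : CommRing (DualNumber F) := inferInstance

/-- The relation yx = xy + ζ over the dual numbers B = F[ζ]/(ζ²). -/
def ZRel : FreeAlgebra (DualNumber F) (Fin 2) → FreeAlgebra (DualNumber F) (Fin 2) → Prop :=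
  fun a b => a = FreeAlgebra.ι (DualNumber F) 1 * FreeAlgebra.ι (DualNumber F) 0 ∧
    b = FreeAlgebra.ι (DualNumber F) 0 * FreeAlgebra.ι (DualNumber F) 1 +
      algebraMap (DualNumber F) (FreeAlgebra (DualNumber F) (Fin 2)) DualNumber.eps

/-- A_ζ(B) = B⟨x,y⟩/⟨yx − xy − ζ⟩ for B the dual numbers over F. -/
abbrev Azeta := RingQuot (ZRel F)

set_option maxHeartbeats 1000000 in
/-- f₁ = [[x₁,x₂],x₃] and f₂ = [x₁,x₂][x₃,x₄] are polynomial identities for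
A_ζ(B): every commutator lies in ζ·A_ζ(B), hence products of two commutators
vanish and commutators are central. -/
theorem stmt18 [Infinite F]
    (Z : Azeta F) (hZ : Z = algebraMap (DualNumber F) (Azeta F) DualNumber.eps) :
    (∀ a b : Azeta F, ∃ c : Azeta F, a * b - b * a = Z * c) ∧
    (∀ a b c d : Azeta F, (a * b - b * a) * (c * d - d * c) = 0) ∧
    (∀ a b c : Azeta F, (a * b - b * a) * c = c * (a * b - b * a)) := by
  have hZc : ∀ w : Azeta F, Z * w = w * Z := by
    intro w; rw [hZ]; exact Algebra.commutes _ w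
  have hZZ : Z * Z = 0 := by
    rw [hZ]
    exact (map_mul (algebraMap (DualNumber F) (Azeta F)) DualNumber.eps
      DualNumber.eps).symm.trans (by rw [DualNumber.eps_mul_eps, map_zero])
  set π := RingQuot.mkAlgHom (DualNumber F) (ZRel F) with hπ
  have hyx : π (FreeAlgebra.ι (DualNumber F) 1) * π (FreeAlgebra.ι (DualNumber F) 0)
      = π (FreeAlgebra.ι (DualNumber F) 0) * π (FreeAlgebra.ι (DualNumber F) 1) + Z := by
    have h : π (FreeAlgebra.ι (DualNumber F) 1 * FreeAlgebra.ι (DualNumber F) 0)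
        = π (FreeAlgebra.ι (DualNumber F) 0 * FreeAlgebra.ι (DualNumber F) 1 +
          algebraMap (DualNumber F) (FreeAlgebra (DualNumber F) (Fin 2)) DualNumber.eps) :=
      RingQuot.mkAlgHom_rel (DualNumber F) ⟨rfl, rfl⟩
    calc π (FreeAlgebra.ι (DualNumber F) 1) * π (FreeAlgebra.ι (DualNumber F) 0)
        = π (FreeAlgebra.ι (DualNumber F) 1 * FreeAlgebra.ι (DualNumber F) 0) :=
          (map_mul π _ _).symm
      _ = π (FreeAlgebra.ι (DualNumber F) 0 * FreeAlgebra.ι (DualNumber F) 1 +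
            algebraMap (DualNumber F) (FreeAlgebra (DualNumber F) (Fin 2)) DualNumber.eps) := h
      _ = π (FreeAlgebra.ι (DualNumber F) 0 * FreeAlgebra.ι (DualNumber F) 1) +
            π (algebraMap (DualNumber F) (FreeAlgebra (DualNumber F) (Fin 2)) DualNumber.eps) :=
          map_add π _ _
      _ = π (FreeAlgebra.ι (DualNumber F) 0) * π (FreeAlgebra.ι (DualNumber F) 1) + Z :=
          congrArg₂ (· + ·) (map_mul π _ _) ((AlgHom.commutes π _).trans hZ.symm)
  have keyF : ∀ p q : FreeAlgebra (DualNumber F) (Fin 2),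
      ∃ c, π p * π q - π q * π p = Z * c := by
    intro p
    induction p using FreeAlgebra.induction with
    | grade0 r =>
        intro q
        exact ⟨0, auxZ_comm Z _ _
          (((AlgHom.commutes π r).symm ▸ Algebra.commutes r (π q) :))⟩
    | grade1 i =>
        intro q
        induction q using FreeAlgebra.induction with
        | grade0 r =>
            exact ⟨0, auxZ_comm Z _ _
              (((AlgHom.commutes π r).symm ▸ (Algebra.commutes r
                (π (FreeAlgebra.ι (DualNumber F) i))).symm :))⟩
        | grade1 j =>
            fin_cases i <;> fin_cases j
            · exact ⟨0, auxZ_comm Z _ _ rfl⟩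
            · exact ⟨-1, auxZ_xy Z _ _ hyx⟩
            · exact ⟨1, auxZ_yx Z _ _ hyx⟩
            · exact ⟨0, auxZ_comm Z _ _ rfl⟩
        | mul q r hq hr =>
            obtain ⟨c1, h1⟩ := hq
            obtain ⟨c2, h2⟩ := hr
            refine ⟨π q * c2 + c1 * π r, ?_⟩
            rw [map_mul]
            exact auxZ_mul_right Z hZc _ _ _ _ _ h1 h2
        | add q r hq hr =>
            obtain ⟨c1, h1⟩ := hq
            obtain ⟨c2, h2⟩ := hr
            refine ⟨c1 + c2, ?_⟩
            rw [map_add]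
            exact auxZ_add_right Z _ _ _ _ _ h1 h2
    | mul p r hp hr =>
        intro q
        obtain ⟨c1, h1⟩ := hp q
        obtain ⟨c2, h2⟩ := hr q
        refine ⟨π p * c2 + c1 * π r, ?_⟩
        rw [map_mul]
        exact auxZ_mul_left Z hZc _ _ _ _ _ h1 h2
    | add p r hp hr =>
        intro q
        obtain ⟨c1, h1⟩ := hp q
        obtain ⟨c2, h2⟩ := hr q
        refine ⟨c1 + c2, ?_⟩
        rw [map_add]
        exact auxZ_add_left Z _ _ _ _ _ h1 h2
  have key : ∀ a b : Azeta F, ∃ c : Azeta F, a * b - b * a = Z * c := by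
    intro a b
    obtain ⟨p, rfl⟩ := RingQuot.mkAlgHom_surjective (DualNumber F) (ZRel F) a
    obtain ⟨q, rfl⟩ := RingQuot.mkAlgHom_surjective (DualNumber F) (ZRel F) b
    exact keyF p q
  refine ⟨key, ?_, ?_⟩
  · intro a b c d
    obtain ⟨c1, h1⟩ := key a b
    obtain ⟨c2, h2⟩ := key c d
    exact auxZ_prod Z hZc hZZ _ _ _ _ _ _ h1 h2
  · intro a b c
    obtain ⟨c1, h1⟩ := key a b
    obtain ⟨c2, h2⟩ := key c1 c
    exact auxZ_central Z hZc hZZ _ _ _ _ _ h1 h2
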